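/- arXiv:math/0505248 — 2 statements merged into one kernel-verified Lean document; each statement's English description precedes it below -/
import Mathlib

section
/- For any integer n ≥ 1 and nonzero complex a, q, one has ∏_{j=2}^n (aq^{j-2})_{j-1} = (-a)^{binom(n,2)} q^{3·binom(n,3)} ∏_{j=2}^n (q^{2-2n+j}/a)_{j-1}, where (x)_k is the elliptic shifted factorial. -/
/-!
Since θ(1/z) = -θ(z)/z, every factor θ(q^{2-2n+j+l}/a) on the right becomes
-(q^{2-2n+j+l}/a) · θ(a q^{2n-2-j-l}). Indexing the factors of either side by the triangle
l ≤ i ≤ m = n - 2 (with i = j - 2), the left side is ∏ θ(a q^{i+l}) and the theta factors on the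
right are ∏ θ(a q^{(m-l)+(m-i)}), so the reflection (i, l) ↦ (m - l, m - i) of the triangle
identifies them. The prefactors collected on the right multiply to the inverse of
∏ (-a) q^{i+l} = (-a)^{C(n,2)} q^{3C(n,3)}.
-/

open Finset

/-- The modified theta function θ(x) = ∏_{j≥0} (1 - pʲx)(1 - pʲ⁺¹/x). -/
noncomputable def theta (p x : ℂ) : ℂ :=
  ∏' j : ℕ, ((1 - p ^ j * x) * (1 - p ^ (j + 1) * x⁻¹))

/-- The elliptic shifted factorial (x)ₖ = θ(x)θ(xq)⋯θ(xq^{k-1}). -/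
noncomputable def ell (p q x : ℂ) (k : ℕ) : ℂ :=
  ∏ l ∈ Finset.range k, theta p (x * q ^ l)

section Theta

variable {p : ℂ}

theorem multipliable_one_sub_pow_mul (hp : ‖p‖ < 1) (w : ℂ) :
    Multipliable fun i : ℕ ↦ 1 - p ^ i * w := by
  simpa only [sub_eq_add_neg] using Complex.multipliable_one_add_of_summable
    ((summable_geometric_of_norm_lt_one hp).mul_right w).neg

theorem tprod_one_sub_pow_mul_eq (hp : ‖p‖ < 1) (w : ℂ) :
    ∏' i : ℕ, (1 - p ^ i * w) = (1 - w) * ∏' i : ℕ, (1 - p ^ i * (p * w)) := by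
  have h := multipliable_one_sub_pow_mul hp (p * w)
  rw [tprod_eq_zero_mul' (h.congr fun i ↦ by ring), pow_zero, one_mul]
  exact congrArg _ (tprod_congr fun i ↦ by ring)

theorem theta_eq_tprod_mul_tprod (hp : ‖p‖ < 1) (z : ℂ) :
    theta p z = (∏' i : ℕ, (1 - p ^ i * z)) * ∏' i : ℕ, (1 - p ^ i * (p * z⁻¹)) := by
  rw [theta, ← (multipliable_one_sub_pow_mul hp z).tprod_mul
    (multipliable_one_sub_pow_mul hp _)]
  exact tprod_congr fun i ↦ by ring

theorem theta_inv (hp : ‖p‖ < 1) {z : ℂ} (hz : z ≠ 0) : theta p z⁻¹ = -z⁻¹ * theta p z := by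
  have h := theta_eq_tprod_mul_tprod hp z⁻¹
  rw [inv_inv] at h
  rw [h, theta_eq_tprod_mul_tprod hp z, tprod_one_sub_pow_mul_eq hp z⁻¹,
    tprod_one_sub_pow_mul_eq hp z, show 1 - z⁻¹ = -z⁻¹ * (1 - z) by field_simp; ring]
  ring

end Theta

section ProdRange

variable {M : Type*} [CommMonoid M]

theorem prod_triangle_reflect (f : ℕ → ℕ → M) (m : ℕ) :
    ∏ i ∈ range (m + 1), ∏ l ∈ range (i + 1), f (m - l) (m - i) =
      ∏ i ∈ range (m + 1), ∏ l ∈ range (i + 1), f i l := by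
  rw [prod_sigma', prod_sigma']
  refine prod_nbij' (fun x ↦ ⟨m - x.2, m - x.1⟩) (fun x ↦ ⟨m - x.2, m - x.1⟩) ?_ ?_ ?_ ?_ ?_ <;>
    rintro ⟨i, l⟩ h <;> simp only [mem_sigma, mem_range] at h ⊢ <;>
    first | omega | (congr 2 <;> omega)

theorem prod_range_mul_pow_add (c q : M) (i k : ℕ) :
    ∏ l ∈ range k, c * q ^ (i + l) = c ^ k * q ^ (k * i + k.choose 2) := by
  rw [prod_mul_distrib, prod_const, card_range, prod_pow_eq_pow_sum, sum_add_distrib,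
    sum_const, card_range, smul_eq_mul, sum_range_id, Nat.choose_two_right]

theorem prod_triangle_mul_pow_add (c q : M) (m : ℕ) :
    ∏ i ∈ range m, ∏ l ∈ range (i + 1), c * q ^ (i + l) =
      c ^ (m + 1).choose 2 * q ^ (3 * (m + 1).choose 3) := by
  induction m with
  | zero => simp [Nat.choose_eq_zero_of_lt]
  | succ m ih =>
    have h₂ := Nat.choose_succ_succ' (m + 1) 1
    have h₃ := Nat.choose_succ_succ' (m + 1) 2
    have hm := Nat.add_one_mul_choose_eq m 1
    rw [Nat.choose_one_right] at h₂ hm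
    rw [prod_range_succ, ih, prod_range_mul_pow_add, mul_mul_mul_comm, ← pow_add, ← pow_add]
    congr 2 <;> linarith

theorem prod_Icc_two_eq_prod_range (f : ℕ → M) (m : ℕ) :
    ∏ j ∈ Icc 2 (m + 2), f j = ∏ i ∈ range (m + 1), f (i + 2) := by
  rw [range_eq_Ico, prod_Ico_add', ← Ico_add_one_right_eq_Icc]
  rfl

end ProdRange

theorem ell_mul_pow (p q x : ℂ) (i k : ℕ) :
    ell p q (x * q ^ i) k = ∏ l ∈ range k, theta p (x * q ^ (i + l)) := by
  simp only [ell, pow_add, mul_assoc]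

theorem zpow_div_mul_pow_eq_inv {q : ℂ} (hq : q ≠ 0) (a : ℂ) {e : ℤ} {l k : ℕ}
    (h : e + l = -k) : q ^ e / a * q ^ l = (a * q ^ k)⁻¹ := by
  rw [div_mul_eq_mul_div, ← zpow_natCast, ← zpow_add₀ hq, h, zpow_neg, zpow_natCast, mul_inv,
    div_eq_inv_mul]

theorem ell_prod_invert_general (p q a : ℂ) (hp : ‖p‖ < 1)
    (hq : q ≠ 0) (ha : a ≠ 0) (n : ℕ) :
    ∏ j ∈ Finset.Icc 2 n, ell p q (a * q ^ (j - 2)) (j - 1) =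
      (-a) ^ n.choose 2 * q ^ (3 * n.choose 3) *
        ∏ j ∈ Finset.Icc 2 n,
          ell p q (q ^ ((2 : ℤ) - 2 * (n : ℤ) + (j : ℤ)) / a) (j - 1) := by
  obtain _ | _ | m := n
  · simp
  · simp [Nat.choose_eq_zero_of_lt]
  have hC : ∏ i ∈ range (m + 1), ∏ l ∈ range (i + 1), -(a * q ^ (i + l)) =
      (-a) ^ (m + 2).choose 2 * q ^ (3 * (m + 2).choose 3) := by
    simpa only [neg_mul] using prod_triangle_mul_pow_add (-a) q (m + 1)
  have hC₀ : (-a) ^ (m + 2).choose 2 * q ^ (3 * (m + 2).choose 3) ≠ 0 := by simp [ha, hq]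
  have hR (i : ℕ) (hi : i ∈ range (m + 1)) :
      ell p q (q ^ ((2 : ℤ) - 2 * ((m + 1 + 1 : ℕ) : ℤ) + ((i + 2 : ℕ) : ℤ)) / a) (i + 2 - 1) =
        ∏ l ∈ range (i + 1),
          (-(a * q ^ (m - l + (m - i))))⁻¹ * theta p (a * q ^ (m - l + (m - i))) := by
    refine prod_congr rfl fun l hl ↦ ?_
    rw [mem_range] at hi hl
    rw [zpow_div_mul_pow_eq_inv hq a (k := m - l + (m - i)) (by omega),
      theta_inv hp (by simp [ha, hq]), neg_inv]
  rw [prod_Icc_two_eq_prod_range, prod_Icc_two_eq_prod_range, prod_congr rfl hR,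
    prod_triangle_reflect (fun i l ↦ (-(a * q ^ (i + l)))⁻¹ * theta p (a * q ^ (i + l)))]
  simp only [prod_mul_distrib, prod_inv_distrib, hC, Nat.add_sub_cancel, Nat.reduceSubDiff,
    ell_mul_pow]
  rw [mul_inv_cancel_left₀ hC₀]

/-- ∏_{j=2}^n (aq^{j-2})_{j-1} = (-a)^{C(n,2)} q^{3C(n,3)} ∏_{j=2}^n (q^{2-2n+j}/a)_{j-1}. -/
theorem ell_prod_invert (p q a : ℂ) (hp : ‖p‖ < 1)
    (hq : q ≠ 0) (ha : a ≠ 0) (n : ℕ) (hn : 1 ≤ n) :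
    ∏ j ∈ Finset.Icc 2 n, ell p q (a * q ^ (j - 2)) (j - 1) =
      (-a) ^ n.choose 2 * q ^ (3 * n.choose 3) *
        ∏ j ∈ Finset.Icc 2 n,
          ell p q (q ^ ((2 : ℤ) - 2 * (n : ℤ) + (j : ℤ)) / a) (j - 1) :=
  ell_prod_invert_general p q a hp hq ha n
end

section
/- The trigonometric determinant transformation holds: det_{1≤j,k≤n} ( (z_j)_{k-1} / (a_j z_j)_{k-1} ) = (-1)^{binom(n,2)} q^{binom(n,3)} · det_{1≤j,k≤n} ( z_j^{k-1} (a_j)_{k-1} / (a_j z_j)_{k-1} ), where (x)_k = ∏_{l=0}^{k-1}(1 - x q^l) is the q-shifted factorial, assuming all entries are well-defined (no vanishing denominators). -/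
/-!
Write `F_m(z) = z^m (a)_m / (az)_m`. Pulling one factor out of `(z)_{k+1} = (1 - z) (zq)_k` gives an
expansion `(z)_k = ∑_{m ≤ k} c(k,m) z^m (a)_m (azq^m)_{k-m}` with coefficients independent of `z`
and `a`. Since `(az)_k = (az)_m (azq^m)_{k-m}`, dividing by `(az)_k` shows that the `k`-th column
of the left matrix is `∑_{m ≤ k} c(k,m) F_m`, i.e. the left matrix is the right one times an upper
triangular matrix with diagonal `c(k,k) = (-1)^k q^{C(k,2)}`, whose determinant is
`(-1)^{C(n,2)} q^{C(n,3)}`.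
-/

open Finset

/-- The q-shifted factorial (x)ₖ = (1-x)(1-xq)⋯(1-xq^{k-1}). -/
noncomputable def qfac (q x : ℂ) (k : ℕ) : ℂ :=
  ∏ l ∈ Finset.range k, (1 - x * q ^ l)

section QFac

variable (q : ℂ)

lemma qfac_zero (x : ℂ) : qfac q x 0 = 1 := prod_range_zero _

lemma qfac_succ (x : ℂ) (k : ℕ) : qfac q x (k + 1) = qfac q x k * (1 - x * q ^ k) :=
  prod_range_succ _ _

lemma qfac_succ' (x : ℂ) (k : ℕ) : qfac q x (k + 1) = (1 - x) * qfac q (x * q) k := by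
  rw [qfac, prod_range_succ', pow_zero, mul_one, mul_comm]
  congr 1
  exact prod_congr rfl fun l _ => by ring

lemma qfac_add (x : ℂ) (m j : ℕ) : qfac q x (m + j) = qfac q x m * qfac q (x * q ^ m) j := by
  rw [qfac, prod_range_add]
  congr 1
  exact prod_congr rfl fun l _ => by ring

lemma qfac_ne_zero_of_le {x : ℂ} {m k : ℕ} (hk : qfac q x k ≠ 0) (hmk : m ≤ k) :
    qfac q x m ≠ 0 := by
  obtain ⟨j, rfl⟩ := Nat.exists_eq_add_of_le hmk
  exact left_ne_zero_of_mul (qfac_add q x m j ▸ hk)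

/-- The coefficients `c(k,m)` of `qfac_eq_sum_qcoeff`; in closed form
`c(k,m) = (-1)^m q^{C(m,2)} [k choose m]_q`. -/
noncomputable def qcoeff : ℕ → ℕ → ℂ
  | 0, 0 => 1
  | 0, _ + 1 => 0
  | k + 1, 0 => qcoeff k 0
  | k + 1, m + 1 => q ^ (m + 1) * qcoeff k (m + 1) - q ^ m * qcoeff k m

lemma qcoeff_eq_zero_of_lt : ∀ {k m : ℕ}, k < m → qcoeff q k m = 0
  | 0, _ + 1, _ => rfl
  | k + 1, m + 1, h => by
    rw [qcoeff, qcoeff_eq_zero_of_lt (by omega), qcoeff_eq_zero_of_lt (by omega)]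
    ring

lemma qcoeff_self : ∀ k : ℕ, qcoeff q k k = (-1) ^ k * q ^ k.choose 2
  | 0 => by simp [qcoeff]
  | k + 1 => by
    rw [qcoeff, qcoeff_eq_zero_of_lt q (Nat.lt_succ_self k), qcoeff_self k,
      Nat.choose_succ_succ', Nat.choose_one_right, pow_add, pow_succ]
    ring

lemma prod_range_qcoeff_self (n : ℕ) :
    ∏ i ∈ range n, qcoeff q i i = (-1) ^ n.choose 2 * q ^ n.choose 3 := by
  induction n with
  | zero => simp
  | succ n ih =>
    rw [prod_range_succ, ih, qcoeff_self, Nat.choose_succ_succ', Nat.choose_succ_succ',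
      Nat.choose_one_right, pow_add, pow_add]
    ring

lemma qfac_expansion_term_sub (a z : ℂ) (m j : ℕ) :
    z ^ m * qfac q a m * qfac q (a * z * q ^ m) (j + 1)
      - z ^ (m + 1) * qfac q a (m + 1) * qfac q (a * z * q ^ (m + 1)) j
      = (1 - z) * (z ^ m * qfac q a m * qfac q (a * z * q ^ (m + 1)) j) := by
  rw [qfac_succ', qfac_succ, mul_assoc (a * z), ← pow_succ]
  ring

lemma qfac_eq_sum_qcoeff (a : ℂ) (k : ℕ) (z : ℂ) :
    qfac q z k = ∑ m ∈ range (k + 1),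
      qcoeff q k m * (z ^ m * qfac q a m * qfac q (a * z * q ^ m) (k - m)) := by
  induction k generalizing z with
  | zero => simp [qfac_zero, qcoeff]
  | succ k ih =>
    set F : ℕ → ℂ := fun m => z ^ m * qfac q a m * qfac q (a * z * q ^ m) (k + 1 - m)
    have hshift : ∑ m ∈ range (k + 2), q ^ m * qcoeff q k m * F m
        = ∑ m ∈ range (k + 1), q ^ m * qcoeff q k m * F m := by
      rw [sum_range_succ _ (k + 1), qcoeff_eq_zero_of_lt q (Nat.lt_succ_self k)]
      ring
    have hsplit : ∑ m ∈ range (k + 2), qcoeff q (k + 1) m * F m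
        = ∑ m ∈ range (k + 1), q ^ m * qcoeff q k m * (F m - F (m + 1)) := calc
      _ = ∑ m ∈ range (k + 1), q ^ (m + 1) * qcoeff q k (m + 1) * F (m + 1)
            + q ^ 0 * qcoeff q k 0 * F 0
            - ∑ m ∈ range (k + 1), q ^ m * qcoeff q k m * F (m + 1) := by
        simp only [sum_range_succ', qcoeff, sub_mul, sum_sub_distrib]
        ring
      _ = _ := by
        rw [← sum_range_succ' (fun m => q ^ m * qcoeff q k m * F m), hshift, ← sum_sub_distrib]
        simp only [mul_sub]
    rw [hsplit, qfac_succ', ih (z * q), mul_sum]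
    refine sum_congr rfl fun m hm => ?_
    have hmk : k + 1 - m = k - m + 1 := by have := mem_range.1 hm; omega
    simp only [F, hmk, Nat.add_sub_add_right, qfac_expansion_term_sub, mul_pow]
    ring_nf

lemma qfac_div_eq_sum_qcoeff {a z : ℂ} {k n : ℕ} (hk : k < n) (hden : qfac q (a * z) k ≠ 0) :
    qfac q z k / qfac q (a * z) k
      = ∑ m ∈ range n, z ^ m * qfac q a m / qfac q (a * z) m * qcoeff q k m := by
  rw [← sum_subset (range_subset_range.2 hk) fun m _ hm =>
      by rw [qcoeff_eq_zero_of_lt q (by simpa using hm), mul_zero],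
    qfac_eq_sum_qcoeff q a k z, sum_div]
  refine sum_congr rfl fun m hm => ?_
  have hmk : m ≤ k := Nat.lt_succ_iff.1 (mem_range.1 hm)
  have hsplit : qfac q (a * z) k = qfac q (a * z) m * qfac q (a * z * q ^ m) (k - m) := by
    rw [← qfac_add, Nat.add_sub_cancel' hmk]
  have hm0 : qfac q (a * z) m ≠ 0 := qfac_ne_zero_of_le q hden hmk
  have hrest : qfac q (a * z * q ^ m) (k - m) ≠ 0 := right_ne_zero_of_mul (hsplit ▸ hden)
  rw [hsplit]
  field_simp

end QFac

/-- Trigonometric determinant transformation (Rosengren–Schlosser, Eq. (7.27)):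
det((z_j)_{k-1}/(a_j z_j)_{k-1}) = (-1)^{C(n,2)} q^{C(n,3)} det(z_j^{k-1}(a_j)_{k-1}/(a_j z_j)_{k-1}). -/
theorem trig_det_transform (q : ℂ) (n : ℕ) (z a : Fin n → ℂ)
    (hden : ∀ j k : Fin n, qfac q (a j * z j) (k : ℕ) ≠ 0) :
    Matrix.det (Matrix.of fun j k : Fin n =>
        qfac q (z j) (k : ℕ) / qfac q (a j * z j) (k : ℕ)) =
      (-1) ^ n.choose 2 * q ^ n.choose 3 *
        Matrix.det (Matrix.of fun j k : Fin n =>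
          (z j) ^ (k : ℕ) * qfac q (a j) (k : ℕ) / qfac q (a j * z j) (k : ℕ)) := by
  set U : Matrix (Fin n) (Fin n) ℂ := Matrix.of fun m k => qcoeff q k m
  have hU : U.IsUpperTriangular := fun _ _ h => qcoeff_eq_zero_of_lt q h
  have hfactor : (Matrix.of fun j k : Fin n =>
        qfac q (z j) (k : ℕ) / qfac q (a j * z j) (k : ℕ)) =
      (Matrix.of fun j k : Fin n =>
        (z j) ^ (k : ℕ) * qfac q (a j) (k : ℕ) / qfac q (a j * z j) (k : ℕ)) * U := by
    ext j k
    rw [Matrix.mul_apply, Matrix.of_apply, qfac_div_eq_sum_qcoeff q k.isLt (hden j k),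
      ← Fin.sum_univ_eq_sum_range (fun m => z j ^ m * qfac q (a j) m / qfac q (a j * z j) m *
        qcoeff q k m)]
    rfl
  rw [hfactor, Matrix.det_mul, Matrix.det_of_isUpperTriangular hU, mul_comm]
  congr 1
  rw [← prod_range_qcoeff_self q n, ← Fin.prod_univ_eq_prod_range (fun i => qcoeff q i i)]
  rfl
end
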